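/- Let N be an odd positive integer and let x̃ ∈ ℂ^N with ‖x̃‖₂ = 1. Then x̃^H P_l^R x̃ = 0 and x̃^H P_l^I x̃ = 0 for all l = 1, …, (N−1)/2 if and only if |Σ_{k=0}^{N−1} x̃_k ω^{kn}| = 1 for every n = 0, …, N−1. (Proposition 2: the unit-norm vectors annihilating all the real and imaginary permutation quadratic forms are exactly those with constant-modulus time-domain samples.) -/

import Mathlib

/-!
The quadratic forms `x̃ᴴ P_l^R x̃` and `x̃ᴴ P_l^I x̃` are the real and imaginary parts of the
periodic autocorrelation `r(-l) = ∑ₐ conj(x̃ₐ) x̃ₐ₋ₗ`. Since `r(-d) = conj r(d)` and, for odd `N`,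
every nonzero residue is `±l` with `1 ≤ l ≤ (N-1)/2`, the forms all vanish iff `r` vanishes off
`0`, where `r(0) = ‖x̃‖² = 1`; that is, iff `r` is the unit impulse. By Wiener–Khinchin the DFT
of `r` is `|X̃|²` with `X̃(n) = ∑ₖ x̃ₖ ωᵏⁿ`, and the DFT of the unit impulse is the constant `1`,
so by injectivity of the DFT this happens iff `|X̃(n)| = 1` for all `n`.
-/

open Matrix

/-- The cyclic permutation matrix `P_l = P^l`, with entries `(P_l)_{i,j} = 1` iff
`i ≡ j + l (mod N)`, so that `(P_l y)_i = y_{(i-l) mod N}`. -/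
def Pl (N l : ℕ) : Matrix (Fin N) (Fin N) ℂ :=
  Matrix.of fun i j => if ((i : ZMod N) = (j : ZMod N) + (l : ZMod N)) then 1 else 0

/-- The real part `P_l^R = (P_l + P_lᴴ)/2`. -/
noncomputable def PlR (N l : ℕ) : Matrix (Fin N) (Fin N) ℂ :=
  ((2 : ℂ)⁻¹) • (Pl N l + (Pl N l)ᴴ)

/-- The imaginary part `P_l^I = i(P_lᴴ - P_l)/2`. -/
noncomputable def PlI (N l : ℕ) : Matrix (Fin N) (Fin N) ℂ :=
  (Complex.I / 2) • ((Pl N l)ᴴ - Pl N l)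

open ZMod ComplexConjugate

section Autocorrelation
variable {G : Type*} [AddGroup G] [Fintype G]

noncomputable def autocorr (y : G → ℂ) (d : G) : ℂ :=
  ∑ a, conj (y a) * y (a + d)

lemma autocorr_neg (y : G → ℂ) (d : G) : autocorr y (-d) = conj (autocorr y d) := by
  rw [autocorr, autocorr, map_sum]
  refine Fintype.sum_equiv (Equiv.subRight d) _ _ fun a => ?_
  simp only [Equiv.subRight_apply, map_mul, Complex.conj_conj, sub_add_cancel, ← sub_eq_add_neg]
  ring

lemma autocorr_zero (y : G → ℂ) : autocorr y 0 = ((∑ a, ‖y a‖ ^ 2 : ℝ) : ℂ) := by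
  simp [autocorr, Complex.conj_mul']

end Autocorrelation

section DFT
variable {N : ℕ} [NeZero N]

lemma dft_autocorr_apply (y : ZMod N → ℂ) (k : ZMod N) :
    𝓕 (autocorr y) k = conj (𝓕 y k) * 𝓕 y k := by
  simp only [dft_apply, autocorr, smul_eq_mul, map_sum, map_mul]
  rw [Finset.sum_mul_sum]
  simp only [Finset.mul_sum]
  refine Finset.sum_comm.trans <|
    Fintype.sum_congr _ _ fun a => Fintype.sum_equiv (Equiv.addLeft a) _ _ fun d => ?_
  simp only [Equiv.coe_addLeft]
  rw [← AddChar.map_neg_eq_conj, neg_neg,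
    show -(d * k) = a * k + -((a + d) * k) by ring, AddChar.map_add_eq_mul]
  ring

lemma dft_single_zero : 𝓕 (Pi.single 0 1 : ZMod N → ℂ) = 1 := by
  ext k
  simp [dft_apply, Pi.single_apply]

lemma forall_norm_dft_eq_one_iff {y : ZMod N → ℂ} (h0 : autocorr y 0 = 1) :
    (∀ k, ‖𝓕 y k‖ = 1) ↔ ∀ d ≠ 0, autocorr y d = 0 := by
  have hnorm : ∀ k, ‖𝓕 y k‖ = 1 ↔ 𝓕 (autocorr y) k = 1 := fun k => by
    rw [dft_autocorr_apply, Complex.conj_mul', ← Complex.ofReal_pow, Complex.ofReal_eq_one,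
      pow_eq_one_iff_of_nonneg (norm_nonneg _) two_ne_zero]
  calc (∀ k, ‖𝓕 y k‖ = 1) ↔ 𝓕 (autocorr y) = 𝓕 (Pi.single 0 1) := by
        simp only [hnorm, dft_single_zero, funext_iff, Pi.one_apply]
    _ ↔ autocorr y = Pi.single 0 1 := dft.injective.eq_iff
    _ ↔ ∀ d ≠ 0, autocorr y d = 0 := by
        refine funext_iff.trans (forall_congr' fun d => ?_)
        rcases eq_or_ne d 0 with rfl | hd
        · simp [h0]
        · simp [hd]

end DFT

lemma ZMod.exists_natCast_eq_or_eq_neg_of_odd {N : ℕ} (hN : Odd N) {d : ZMod N} (hd : d ≠ 0) :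
    ∃ l : ℕ, 1 ≤ l ∧ l ≤ (N - 1) / 2 ∧ (d = l ∨ d = -l) := by
  have : NeZero N := ⟨hN.pos.ne'⟩
  have hpos : 0 < d.val := ZMod.val_pos.mpr hd
  have hlt : d.val < N := d.val_lt
  obtain ⟨m, rfl⟩ := hN
  by_cases hsmall : d.val ≤ m
  · exact ⟨d.val, hpos, by omega, .inl (ZMod.natCast_zmod_val d).symm⟩
  · refine ⟨2 * m + 1 - d.val, by omega, by omega, .inr ?_⟩
    rw [Nat.cast_sub hlt.le, ZMod.natCast_self, ZMod.natCast_zmod_val, zero_sub, neg_neg]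

lemma forall_autocorr_neg_natCast_eq_zero_iff {N : ℕ} [NeZero N] (hN : Odd N) (y : ZMod N → ℂ) :
    (∀ l : ℕ, 1 ≤ l → l ≤ (N - 1) / 2 → autocorr y (-l) = 0) ↔ ∀ d ≠ 0, autocorr y d = 0 := by
  refine ⟨fun h d hd => ?_, fun h l hl₁ hl₂ => h _ (neg_ne_zero.mpr ?_)⟩
  · obtain ⟨l, hl₁, hl₂, rfl | rfl⟩ := ZMod.exists_natCast_eq_or_eq_neg_of_odd hN hd
    · simpa [autocorr_neg] using h l hl₁ hl₂
    · exact h l hl₁ hl₂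
  · rw [Ne, ZMod.natCast_eq_zero_iff]
    exact Nat.not_dvd_of_pos_of_lt hl₁ (by omega)

lemma star_dotProduct_conjTranspose_mulVec {n : Type*} [Fintype n] (A : Matrix n n ℂ)
    (x : n → ℂ) : star x ⬝ᵥ (Aᴴ *ᵥ x) = conj (star x ⬝ᵥ (A *ᵥ x)) := by
  rw [← Complex.star_def, star_dotProduct, star_mulVec, conjTranspose_conjTranspose,
    ← dotProduct_mulVec]

lemma star_dotProduct_PlR_mulVec (N l : ℕ) (x : Fin N → ℂ) :
    star x ⬝ᵥ (PlR N l *ᵥ x) = (star x ⬝ᵥ (Pl N l *ᵥ x)).re := by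
  rw [Complex.re_eq_add_conj, PlR, smul_mulVec, dotProduct_smul, add_mulVec, dotProduct_add,
    star_dotProduct_conjTranspose_mulVec, smul_eq_mul, inv_mul_eq_div]

lemma star_dotProduct_PlI_mulVec (N l : ℕ) (x : Fin N → ℂ) :
    star x ⬝ᵥ (PlI N l *ᵥ x) = (star x ⬝ᵥ (Pl N l *ᵥ x)).im := by
  rw [Complex.im_eq_sub_conj, PlI, smul_mulVec, dotProduct_smul, sub_mulVec, dotProduct_sub,
    star_dotProduct_conjTranspose_mulVec, smul_eq_mul, ← div_div, Complex.div_I]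
  ring

lemma star_dotProduct_PlR_and_PlI_mulVec_eq_zero_iff (N l : ℕ) (x : Fin N → ℂ) :
    (star x ⬝ᵥ (PlR N l *ᵥ x) = 0 ∧ star x ⬝ᵥ (PlI N l *ᵥ x) = 0) ↔
      star x ⬝ᵥ (Pl N l *ᵥ x) = 0 := by
  rw [star_dotProduct_PlR_mulVec, star_dotProduct_PlI_mulVec, Complex.ofReal_eq_zero,
    Complex.ofReal_eq_zero, Complex.ext_iff (w := 0), Complex.zero_re, Complex.zero_im]

section CyclicShift
variable {N : ℕ} [NeZero N]

/-- Unlike `ZMod.finEquiv`, this is definitionally the coercion `k ↦ (k : ZMod N)` used in `Pl`. -/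
def finEquivZMod (N : ℕ) [NeZero N] : Fin N ≃ ZMod N where
  toFun k := ((k : ℕ) : ZMod N)
  invFun a := ⟨a.val, a.val_lt⟩
  left_inv k := Fin.ext (ZMod.val_natCast_of_lt k.isLt)
  right_inv := ZMod.natCast_zmod_val

lemma Pl_mulVec_apply (l : ℕ) (x : Fin N → ℂ) (i : Fin N) :
    (Pl N l *ᵥ x) i = x ((finEquivZMod N).symm (finEquivZMod N i - l)) := by
  have hshift : ∀ j : Fin N, (i : ZMod N) = j + l ↔
      j = (finEquivZMod N).symm (finEquivZMod N i - l) := fun j => by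
    rw [Equiv.eq_symm_apply, eq_sub_iff_add_eq, eq_comm]
    rfl
  simp only [mulVec, dotProduct, Pl, of_apply, hshift, ite_mul, one_mul, zero_mul,
    Finset.sum_ite_eq', Finset.mem_univ, if_true]

lemma star_dotProduct_Pl_mulVec (l : ℕ) (x : Fin N → ℂ) :
    star x ⬝ᵥ (Pl N l *ᵥ x) = autocorr (x ∘ (finEquivZMod N).symm) (-l) := by
  rw [autocorr, ← (finEquivZMod N).sum_comp]
  simp [dotProduct, Pl_mulVec_apply, sub_eq_add_neg]

lemma sum_mul_pow_eq_dft {ω : ℂ} (hω : ω = Complex.exp (2 * Real.pi * Complex.I / N))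
    (x : Fin N → ℂ) (n : ℕ) :
    ∑ k : Fin N, x k * ω ^ ((k : ℕ) * n) = 𝓕 (x ∘ (finEquivZMod N).symm) (-(n : ZMod N)) := by
  rw [dft_apply, ← (finEquivZMod N).sum_comp]
  refine Fintype.sum_congr _ _ fun k => ?_
  have : -(finEquivZMod N k * -(n : ZMod N)) = (((k * n : ℕ) : ℤ) : ZMod N) := by
    simp [finEquivZMod]
  rw [this, stdAddChar_coe, hω, ← Complex.exp_nat_mul]
  simp only [Function.comp_apply, Equiv.symm_apply_apply, smul_eq_mul]
  rw [mul_comm]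
  congr 2
  push_cast
  ring

end CyclicShift

/-- Proposition 2: for odd `N` and a unit-norm `x̃ ∈ ℂ^N`, the quadratic forms
`x̃ᴴ P_l^R x̃` and `x̃ᴴ P_l^I x̃` vanish for all `l = 1, …, (N-1)/2` iff the
time-domain samples of `x̃` have constant unit modulus. -/
theorem stmt10 (N : ℕ) (hN : 0 < N) (hodd : Odd N) (ω : ℂ)
    (hω : ω = Complex.exp (2 * (Real.pi : ℂ) * Complex.I / N))
    (x : Fin N → ℂ) (hx : ∑ k : Fin N, ‖x k‖ ^ 2 = 1) :
    (∀ l : ℕ, 1 ≤ l → l ≤ (N - 1) / 2 →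
        star x ⬝ᵥ (PlR N l *ᵥ x) = 0 ∧ star x ⬝ᵥ (PlI N l *ᵥ x) = 0) ↔
      ∀ n : Fin N, ‖∑ k : Fin N, x k * ω ^ ((k : ℕ) * (n : ℕ))‖ = 1 := by
  have : NeZero N := ⟨hN.ne'⟩
  set y := x ∘ (finEquivZMod N).symm
  have hy : autocorr y 0 = 1 := by
    rw [autocorr_zero, ← (finEquivZMod N).sum_comp]
    simp [y, hx]
  simp only [star_dotProduct_PlR_and_PlI_mulVec_eq_zero_iff, star_dotProduct_Pl_mulVec,
    forall_autocorr_neg_natCast_eq_zero_iff hodd, sum_mul_pow_eq_dft hω]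
  rw [← forall_norm_dft_eq_one_iff hy]
  exact ((finEquivZMod N).trans (Equiv.neg _)).forall_congr_right.symm
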